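/- arXiv:math/0609293 — 4 statements merged into one kernel-verified Lean document; each statement's English description precedes it below -/
import Mathlib

section
/- Every loop problem of a monoid is insertion-closed: if xy ∈ L_σ(M) and w ∈ L_σ(M), then xwy ∈ L_σ(M). -/
open FreeMonoid

section LoopPrelude

variable {X M : Type*} [Monoid M]

def barW {X : Type*} (w : List (X ⊕ X)) : List (X ⊕ X) := (w.map Sum.swap).reverse

def posW {X : Type*} (u : List X) : List (X ⊕ X) := u.map Sum.inl

def negW {X : Type*} (v : List X) : List (X ⊕ X) := (v.map Sum.inr).reverse

inductive LStep (σ : FreeMonoid X →* M) : M → (X ⊕ X) → M → Prop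
  | posW (a : M) (x : X) : LStep σ a (Sum.inl x) (a * σ (of x))
  | negW (a : M) (x : X) : LStep σ (a * σ (of x)) (Sum.inr x) a

inductive LPath (σ : FreeMonoid X →* M) : M → List (X ⊕ X) → M → Prop
  | nil (a : M) : LPath σ a [] a
  | cons {a b c : M} {l : X ⊕ X} {w : List (X ⊕ X)}
      (h₁ : LStep σ a l b) (h₂ : LPath σ b w c) : LPath σ a (l :: w) c

def LoopProblem (σ : FreeMonoid X →* M) : Set (List (X ⊕ X)) := { w | LPath σ 1 w 1 }

end LoopPrelude

section SemiPrelude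

variable {X S : Type*} [Semigroup S]

def SLoopProblem (f : X → S) : Set (List (X ⊕ X)) :=
  LoopProblem (FreeMonoid.lift (fun x => (f x : WithOne S)))

end SemiPrelude


lemma LPath.append' {X M : Type*} [Monoid M] {σ : FreeMonoid X →* M} {a b c : M}
    {u v : List (X ⊕ X)} (h₁ : LPath σ a u b) (h₂ : LPath σ b v c) :
    LPath σ a (u ++ v) c := by
  induction h₁ with
  | nil => exact h₂
  | cons s _ ih => exact LPath.cons s (ih h₂)

lemma LPath.split' {X M : Type*} [Monoid M] {σ : FreeMonoid X →* M} {a c : M}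
    {u v : List (X ⊕ X)} (h : LPath σ a (u ++ v) c) :
    ∃ b, LPath σ a u b ∧ LPath σ b v c := by
  induction u generalizing a with
  | nil => exact ⟨a, LPath.nil a, h⟩
  | cons l u ih =>
    cases h with
    | cons s h' =>
      obtain ⟨b, h1, h2⟩ := ih h'
      exact ⟨b, LPath.cons s h1, h2⟩

lemma LPath.mul_left' {X M : Type*} [Monoid M] {σ : FreeMonoid X →* M} {a b : M}
    {u : List (X ⊕ X)} (h : LPath σ a u b) (c : M) :
    LPath σ (c * a) u (c * b) := by
  induction h with
  | nil => exact LPath.nil _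
  | cons s _ ih =>
    refine LPath.cons ?_ ih
    cases s with
    | posW a x => rw [← mul_assoc]; exact LStep.posW _ _
    | negW a x => rw [← mul_assoc]; exact LStep.negW _ _

theorem loop_problem_insertion_closed {X M : Type*} [Monoid M] (σ : FreeMonoid X →* M)
    (hσ : Function.Surjective σ) :
    ∀ x y w : List (X ⊕ X), x ++ y ∈ LoopProblem σ → w ∈ LoopProblem σ →
      x ++ w ++ y ∈ LoopProblem σ := by
  intro x y w hxy hw
  obtain ⟨m, hx, hy⟩ := LPath.split' hxy
  have hwm : LPath σ m w m := by simpa using (LPath.mul_left' hw m)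
  exact LPath.append' (LPath.append' hx hwm) hy
end

section
/- Let M be a monoid, σ : X⁺ → M a surjective semigroup homomorphism from a free semigroup, and τ : X* → M its unique extension to a monoid homomorphism. Then L_σ(M) = L_τ(M) ∩ (X X̂* X̄ ∪ {ε}), where X̂ = X ∪ X̄. -/
open FreeMonoid

/-! Collapsing the adjoined identity, `M¹ → M`, maps loops of `M¹` at `1` to loops of `M` at `1`.
In `M¹` no edge enters `1` along a positive letter or leaves it along a negative one, which forces
the shape `x ⋯ ȳ` on nonempty loops. Conversely the inner part of such a loop of `M` runs from
`f x` to `f y` and is carried into `M¹` by the coercion, which is multiplicative but does not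
preserve `1`; the first and last letters are then reattached at the new identity. -/

namespace LStep

variable {X M : Type*} [Monoid M] {σ : FreeMonoid X →* M} {a b : M}

@[simp]
theorem inl_iff {x : X} : LStep σ a (Sum.inl x) b ↔ b = a * σ (of x) := by
  refine ⟨fun h => by cases h; rfl, ?_⟩
  rintro rfl
  exact posW a x

@[simp]
theorem inr_iff {x : X} : LStep σ a (Sum.inr x) b ↔ a = b * σ (of x) := by
  refine ⟨fun h => by cases h; rfl, ?_⟩
  rintro rfl
  exact negW b x

theorem map {N : Type*} [Monoid N] {τ : FreeMonoid X →* N} (φ : M →ₙ* N)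
    (hφ : ∀ x, τ (of x) = φ (σ (of x))) {l : X ⊕ X} (h : LStep σ a l b) :
    LStep τ (φ a) l (φ b) := by
  cases h with
  | posW a x => simp [hφ]
  | negW b x => simp [hφ]

end LStep

namespace LPath

variable {X M : Type*} [Monoid M] {σ : FreeMonoid X →* M} {a c : M}

theorem cons_iff {l : X ⊕ X} {w : List (X ⊕ X)} :
    LPath σ a (l :: w) c ↔ ∃ b, LStep σ a l b ∧ LPath σ b w c := by
  refine ⟨fun h => ?_, fun ⟨_, hs, hp⟩ => cons hs hp⟩
  cases h with
  | cons hs hp => exact ⟨_, hs, hp⟩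

@[simp]
theorem nil_iff : LPath σ a [] c ↔ a = c := by
  refine ⟨fun h => by cases h; rfl, ?_⟩
  rintro rfl
  exact nil a

theorem singleton_iff {l : X ⊕ X} : LPath σ a [l] c ↔ LStep σ a l c := by
  simp [cons_iff]

theorem append_iff {u v : List (X ⊕ X)} :
    LPath σ a (u ++ v) c ↔ ∃ b, LPath σ a u b ∧ LPath σ b v c := by
  induction u generalizing a with
  | nil => simp
  | cons l u ih =>
    simp only [List.cons_append, cons_iff, ih]
    exact ⟨fun ⟨b, hs, d, hp, hq⟩ => ⟨d, ⟨b, hs, hp⟩, hq⟩,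
      fun ⟨d, ⟨b, hs, hp⟩, hq⟩ => ⟨b, hs, d, hp, hq⟩⟩

theorem map {N : Type*} [Monoid N] {τ : FreeMonoid X →* N} (φ : M →ₙ* N)
    (hφ : ∀ x, τ (of x) = φ (σ (of x))) {w : List (X ⊕ X)} (h : LPath σ a w c) :
    LPath τ (φ a) w (φ c) := by
  induction h with
  | nil a => exact nil _
  | cons hs _ ih => exact cons (hs.map φ hφ) ih

end LPath

theorem WithOne.mul_coe_ne_one {S : Type*} [Mul S] (a : WithOne S) (s : S) :
    a * (s : WithOne S) ≠ 1 := by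
  induction a using WithOne.cases_on <;> simp [← WithOne.coe_mul]

section Semigroup

variable {X S : Type*} [Semigroup S] {g : X → S} {a b : WithOne S} {l : X ⊕ X}

theorem LStep.exists_eq_inl_of_one_left
    (h : LStep (FreeMonoid.lift fun x => (g x : WithOne S)) 1 l b) : ∃ x, l = Sum.inl x := by
  rcases l with x | x
  · exact ⟨x, rfl⟩
  · exact absurd (LStep.inr_iff.mp h).symm (by simpa using WithOne.mul_coe_ne_one b (g x))

theorem LStep.exists_eq_inr_of_one_right
    (h : LStep (FreeMonoid.lift fun x => (g x : WithOne S)) a l 1) : ∃ y, l = Sum.inr y := by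
  rcases l with y | y
  · exact absurd (LStep.inl_iff.mp h).symm (by simpa using WithOne.mul_coe_ne_one a (g y))
  · exact ⟨y, rfl⟩

theorem exists_eq_inl_cons_append_inr_of_mem_SLoopProblem {w : List (X ⊕ X)}
    (hw : w ∈ SLoopProblem g) (hne : w ≠ []) :
    ∃ (x y : X) (v : List (X ⊕ X)), w = Sum.inl x :: v ++ [Sum.inr y] := by
  obtain ⟨l, w, rfl⟩ := List.exists_cons_of_ne_nil hne
  obtain ⟨b, hl, hp⟩ := LPath.cons_iff.mp hw
  obtain ⟨x, rfl⟩ := hl.exists_eq_inl_of_one_left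
  rcases List.eq_nil_or_concat' w with rfl | ⟨v, l', rfl⟩
  · obtain ⟨y, hy⟩ := (LPath.nil_iff.mp hp ▸ hl).exists_eq_inr_of_one_right
    exact absurd hy Sum.inl_ne_inr
  · obtain ⟨d, -, hl'⟩ := LPath.append_iff.mp hp
    obtain ⟨y, rfl⟩ := (LPath.singleton_iff.mp hl').exists_eq_inr_of_one_right
    exact ⟨x, y, v, rfl⟩

end Semigroup

section Monoid

variable {X M : Type*} [Monoid M] (f : X → M)

theorem SLoopProblem_subset_LoopProblem : SLoopProblem f ⊆ LoopProblem (FreeMonoid.lift f) :=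
  fun _ hw => LPath.map (WithOne.lift (MulHom.id M)).toMulHom (fun _ => by simp) hw

theorem inl_cons_append_inr_mem_SLoopProblem {x y : X} {v : List (X ⊕ X)}
    (hw : Sum.inl x :: v ++ [Sum.inr y] ∈ LoopProblem (FreeMonoid.lift f)) :
    Sum.inl x :: v ++ [Sum.inr y] ∈ SLoopProblem f := by
  obtain ⟨b, hxv, hy⟩ := LPath.append_iff.mp hw
  obtain ⟨a, hx, hv⟩ := LPath.cons_iff.mp hxv
  simp only [LPath.singleton_iff, LStep.inl_iff, LStep.inr_iff, FreeMonoid.lift_eval_of,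
    one_mul] at hx hy
  subst hx hy
  refine LPath.append_iff.mpr ⟨(f y : WithOne M), LPath.cons_iff.mpr ⟨(f x : WithOne M), ?_, ?_⟩,
    LPath.singleton_iff.mpr ?_⟩
  · simp
  · exact hv.map (τ := FreeMonoid.lift fun x => (f x : WithOne M)) WithOne.coeMulHom
      fun _ => rfl
  · simp

end Monoid

theorem semigroup_vs_monoid_loop_problem_general {X M : Type*} [Monoid M] (f : X → M) :
    SLoopProblem f = LoopProblem (FreeMonoid.lift f) ∩
      {w : List (X ⊕ X) |
        (∃ (x y : X) (v : List (X ⊕ X)), w = Sum.inl x :: v ++ [Sum.inr y]) ∨ w = []} := by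
  ext w
  refine ⟨fun hw => ⟨SLoopProblem_subset_LoopProblem f hw, ?_⟩, ?_⟩
  · rcases eq_or_ne w [] with rfl | hne
    · exact Or.inr rfl
    · exact Or.inl (exists_eq_inl_cons_append_inr_of_mem_SLoopProblem hw hne)
  · rintro ⟨hw, ⟨x, y, v, rfl⟩ | rfl⟩
    · exact inl_cons_append_inr_mem_SLoopProblem f hw
    · exact LPath.nil 1

theorem semigroup_vs_monoid_loop_problem {X M : Type*} [Monoid M] (f : X → M)
    (hf : ∀ m : M, ∃ w : List X, w ≠ [] ∧ FreeMonoid.lift f (FreeMonoid.ofList w) = m) :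
    SLoopProblem f = LoopProblem (FreeMonoid.lift f) ∩
      {w : List (X ⊕ X) |
        (∃ (x y : X) (v : List (X ⊕ X)), w = Sum.inl x :: v ++ [Sum.inr y]) ∨ w = []} :=
  semigroup_vs_monoid_loop_problem_general f
end

section
/- Let M be a monoid, σ : X⁺ → M a surjective semigroup homomorphism, and τ : X* → M its monoid extension. Then for any word w ∈ X⁺ with τ(w) = 1, we have L_τ(M) = { u ∈ (X ∪ X̄)* : w u w̄ ∈ L_σ(M) }. -/
open FreeMonoid

section Aux

variable {X M : Type*} [Monoid M]

lemma lstep_inl {σ : FreeMonoid X →* M} {a b : M} {x : X}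
    (h : LStep σ a (Sum.inl x) b) : b = a * σ (of x) := by
  cases h; rfl

lemma lstep_inr {σ : FreeMonoid X →* M} {a b : M} {x : X}
    (h : LStep σ a (Sum.inr x) b) : a = b * σ (of x) := by
  cases h; rfl

lemma lpath_append {σ : FreeMonoid X →* M} {a b c : M} {u v : List (X ⊕ X)}
    (h1 : LPath σ a u b) (h2 : LPath σ b v c) : LPath σ a (u ++ v) c := by
  induction h1 with
  | nil a => simpa using h2
  | cons s p ih => exact LPath.cons s (ih h2)

lemma lpath_split {σ : FreeMonoid X →* M} {a c : M} {u v : List (X ⊕ X)}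
    (h : LPath σ a (u ++ v) c) : ∃ b, LPath σ a u b ∧ LPath σ b v c := by
  induction u generalizing a with
  | nil => exact ⟨a, LPath.nil a, by simpa using h⟩
  | cons l t ih =>
    rw [List.cons_append] at h
    cases h with
    | cons s p =>
      obtain ⟨b, hb1, hb2⟩ := ih p
      exact ⟨b, LPath.cons s hb1, hb2⟩

lemma lpath_posW (σ : FreeMonoid X →* M) (a : M) (w : List X) :
    LPath σ a (posW w) (a * σ (ofList w)) := by
  induction w generalizing a with
  | nil => simpa [posW] using LPath.nil a
  | cons x t ih =>
    have h := LPath.cons (LStep.posW (σ := σ) a x) (ih (a * σ (of x)))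
    simpa [posW, ofList_cons, map_mul, mul_assoc] using h

lemma lpath_posW_det {σ : FreeMonoid X →* M} {a b : M} {w : List X}
    (h : LPath σ a (posW w) b) : b = a * σ (ofList w) := by
  induction w generalizing a with
  | nil =>
    cases h
    simp
  | cons x t ih =>
    cases h with
    | cons s p =>
      have hs := lstep_inl s
      subst hs
      have := ih p
      simpa [ofList_cons, map_mul, mul_assoc] using this

lemma negW_cons (x : X) (t : List X) : negW (x :: t) = negW t ++ [Sum.inr x] := by
  simp [negW]

lemma lpath_negW (σ : FreeMonoid X →* M) (a : M) (w : List X) :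
    LPath σ (a * σ (ofList w)) (negW w) a := by
  induction w generalizing a with
  | nil => simpa [negW] using LPath.nil a
  | cons x t ih =>
    have h1 : LPath σ (a * σ (ofList (x :: t))) (negW t) (a * σ (of x)) := by
      have := ih (a * σ (of x))
      simpa [ofList_cons, map_mul, mul_assoc] using this
    have h2 : LPath σ (a * σ (of x)) [Sum.inr x] a :=
      LPath.cons (LStep.negW a x) (LPath.nil a)
    rw [negW_cons]
    exact lpath_append h1 h2

lemma lpath_negW_det {σ : FreeMonoid X →* M} {a b : M} {w : List X}
    (h : LPath σ a (negW w) b) : a = b * σ (ofList w) := by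
  induction w generalizing a b with
  | nil =>
    cases h
    simp
  | cons x t ih =>
    rw [negW_cons] at h
    obtain ⟨c, h1, h2⟩ := lpath_split h
    have hc : c = b * σ (of x) := by
      cases h2 with
      | cons s p =>
        cases p
        exact lstep_inr s
    have := ih h1
    rw [this, hc]
    simp [ofList_cons, map_mul, mul_assoc]

lemma lstep_coe {f : X → M} {a b : M} {l : X ⊕ X}
    (h : LStep (FreeMonoid.lift f) a l b) :
    LStep (FreeMonoid.lift (fun x => (f x : WithOne M))) (a : WithOne M) l (b : WithOne M) := by
  cases h with
  | posW _ x0 =>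
    have h1 : ((a * FreeMonoid.lift f (of x0) : M) : WithOne M)
        = (a : WithOne M) * (FreeMonoid.lift (fun x => (f x : WithOne M))) (of x0) := by
      simp [lift_eval_of]
    rw [h1]
    exact LStep.posW _ _
  | negW _ x0 =>
    have h1 : ((b * FreeMonoid.lift f (of x0) : M) : WithOne M)
        = (b : WithOne M) * (FreeMonoid.lift (fun x => (f x : WithOne M))) (of x0) := by
      simp [lift_eval_of]
    rw [h1]
    exact LStep.negW _ _

lemma lpath_coe {f : X → M} {a b : M} {u : List (X ⊕ X)}
    (h : LPath (FreeMonoid.lift f) a u b) :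
    LPath (FreeMonoid.lift (fun x => (f x : WithOne M))) (a : WithOne M) u (b : WithOne M) := by
  induction h with
  | nil a => exact LPath.nil _
  | cons h₁ h₂ ih => exact LPath.cons (lstep_coe h₁) ih

def wproj : WithOne M → M := WithOne.recOneCoe 1 id

@[simp] lemma wproj_one : wproj (1 : WithOne M) = (1 : M) := WithOne.recOneCoe_one _ _

@[simp] lemma wproj_coe (m : M) : wproj (m : WithOne M) = m := WithOne.recOneCoe_coe _ _ _

lemma lstep_proj {f : X → M} {s t : WithOne M} {l : X ⊕ X}
    (h : LStep (FreeMonoid.lift (fun x => (f x : WithOne M))) s l t) :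
    LStep (FreeMonoid.lift f) (wproj s) l (wproj t) := by
  cases h with
  | posW s x =>
    rcases eq_or_ne s 1 with rfl | hs
    · have h1 : (1 : WithOne M) * (FreeMonoid.lift (fun x => (f x : WithOne M))) (of x)
          = ((f x : M) : WithOne M) := by simp [lift_eval_of]
      rw [h1, wproj_one, wproj_coe]
      have := LStep.posW (σ := FreeMonoid.lift f) 1 x
      simpa [lift_eval_of] using this
    · obtain ⟨m, rfl⟩ := WithOne.ne_one_iff_exists.mp hs
      have h1 : (m : WithOne M) * (FreeMonoid.lift (fun x => (f x : WithOne M))) (of x)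
          = ((m * f x : M) : WithOne M) := by simp [lift_eval_of]
      rw [h1, wproj_coe, wproj_coe]
      have := LStep.posW (σ := FreeMonoid.lift f) m x
      simpa [lift_eval_of] using this
  | negW t x =>
    rcases eq_or_ne t 1 with rfl | ht
    · have h1 : (1 : WithOne M) * (FreeMonoid.lift (fun x => (f x : WithOne M))) (of x)
          = ((f x : M) : WithOne M) := by simp [lift_eval_of]
      rw [h1, wproj_one, wproj_coe]
      have := LStep.negW (σ := FreeMonoid.lift f) 1 x
      simpa [lift_eval_of] using this
    · obtain ⟨m, rfl⟩ := WithOne.ne_one_iff_exists.mp ht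
      have h1 : (m : WithOne M) * (FreeMonoid.lift (fun x => (f x : WithOne M))) (of x)
          = ((m * f x : M) : WithOne M) := by simp [lift_eval_of]
      rw [h1, wproj_coe, wproj_coe]
      have := LStep.negW (σ := FreeMonoid.lift f) m x
      simpa [lift_eval_of] using this

lemma lpath_proj {f : X → M} {s t : WithOne M} {u : List (X ⊕ X)}
    (h : LPath (FreeMonoid.lift (fun x => (f x : WithOne M))) s u t) :
    LPath (FreeMonoid.lift f) (wproj s) u (wproj t) := by
  induction h with
  | nil a => exact LPath.nil _
  | cons h₁ h₂ ih => exact LPath.cons (lstep_proj h₁) ih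

lemma lift_coe_ofList {f : X → M} :
    ∀ (w : List X), w ≠ [] →
      FreeMonoid.lift (fun x => (f x : WithOne M)) (ofList w)
        = ((FreeMonoid.lift f (ofList w) : M) : WithOne M)
  | [], h => absurd rfl h
  | [x], _ => by simp [ofList_cons, map_mul, lift_eval_of]
  | x :: y :: t, _ => by
    have ih := lift_coe_ofList (f := f) (y :: t) (by simp)
    rw [ofList_cons, map_mul, map_mul, ih, lift_eval_of, lift_eval_of, ← WithOne.coe_mul]

lemma barW_posW (w : List X) : barW (posW w) = negW w := by
  simp [barW, posW, negW, List.map_map, Function.comp_def]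

end Aux

theorem monoid_loop_problem_from_semigroup {X M : Type*} [Monoid M] (f : X → M)
    (hf : ∀ m : M, ∃ w : List X, w ≠ [] ∧ FreeMonoid.lift f (FreeMonoid.ofList w) = m)
    (w : List X) (hw : w ≠ []) (hw1 : FreeMonoid.lift f (FreeMonoid.ofList w) = 1) :
    LoopProblem (FreeMonoid.lift f) =
      {u : List (X ⊕ X) | posW w ++ u ++ barW (posW w) ∈ SLoopProblem f} := by
  set σ' := FreeMonoid.lift (fun x => (f x : WithOne M)) with hσ'
  have hσ'w : σ' (ofList w) = ((1 : M) : WithOne M) := by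
    rw [hσ', lift_coe_ofList w hw, hw1]
  ext u
  simp only [Set.mem_setOf_eq, SLoopProblem, LoopProblem, barW_posW, ← hσ']
  constructor
  · intro h
    have p1 : LPath σ' 1 (posW w) ((1 : M) : WithOne M) := by
      have := lpath_posW σ' 1 w
      rw [hσ'w, one_mul] at this
      exact this
    have p2 : LPath σ' ((1 : M) : WithOne M) u ((1 : M) : WithOne M) := lpath_coe h
    have p3 : LPath σ' ((1 : M) : WithOne M) (negW w) 1 := by
      have := lpath_negW σ' 1 w
      rw [hσ'w, one_mul] at this
      exact this
    exact lpath_append (lpath_append p1 p2) p3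
  · intro h
    obtain ⟨c, h1, h2⟩ := lpath_split h
    obtain ⟨m, ha, hb⟩ := lpath_split h1
    have hm : m = ((1 : M) : WithOne M) := by
      have := lpath_posW_det ha
      rw [hσ'w, one_mul] at this
      exact this
    have hc : c = ((1 : M) : WithOne M) := by
      have := lpath_negW_det h2
      rw [hσ'w, one_mul] at this
      exact this
    rw [hm, hc] at hb
    have := lpath_proj hb
    simpa using this
end

section
/- Let σ : X* → M be a finite choice of generators for an infinite monoid M. Then the loop problem L_σ(M) has infinitely many distinct left quotients u⁻¹L = {x : ux ∈ L}, and hence is not regular; specifically, for u, v ∈ X* the quotients u⁻¹L_σ(M) and v⁻¹L_σ(M) are equal only if σ(u) = σ(v). -/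
open FreeMonoid

section Aux

variable {X M : Type*} [Monoid M] (σ : FreeMonoid X →* M)

theorem LPath.append_iff_s12 {a c : M} {w₁ w₂ : List (X ⊕ X)} :
    LPath σ a (w₁ ++ w₂) c ↔ ∃ b, LPath σ a w₁ b ∧ LPath σ b w₂ c := by
  induction w₁ generalizing a with
  | nil =>
    simp only [List.nil_append]
    constructor
    · intro h; exact ⟨a, LPath.nil a, h⟩
    · rintro ⟨b, hb, h⟩; cases hb; exact h
  | cons l w ih =>
    constructor
    · rintro (_ | ⟨h₁, h₂⟩)
      obtain ⟨b, hb, h⟩ := (ih).mp h₂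
      exact ⟨b, LPath.cons h₁ hb, h⟩
    · rintro ⟨b, (_ | ⟨h₁, h₂⟩), h⟩
      exact LPath.cons h₁ ((ih).mpr ⟨b, h₂, h⟩)

theorem LPath.posW_iff {a c : M} {u : List X} :
    LPath σ a (posW u) c ↔ c = a * σ (FreeMonoid.ofList u) := by
  induction u generalizing a with
  | nil =>
    constructor
    · rintro (_ | _); simp
    · rintro rfl
      have : σ (FreeMonoid.ofList ([] : List X)) = 1 := map_one σ
      rw [this, mul_one]; exact LPath.nil a
  | cons x u ih =>
    constructor
    · rintro (_ | ⟨h₁, h₂⟩)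
      cases h₁
      rw [ih.mp h₂]
      have : FreeMonoid.ofList (x :: u) = of x * FreeMonoid.ofList u := rfl
      rw [this, map_mul, mul_assoc]
    · rintro rfl
      refine LPath.cons (LStep.posW a x) (ih.mpr ?_)
      have : FreeMonoid.ofList (x :: u) = of x * FreeMonoid.ofList u := rfl
      rw [this, map_mul, mul_assoc]

theorem LPath.negW_iff {a c : M} {u : List X} :
    LPath σ a (negW u) c ↔ a = c * σ (FreeMonoid.ofList u) := by
  induction u generalizing a c with
  | nil =>
    constructor
    · rintro (_ | _); simp
    · rintro rfl
      have : σ (FreeMonoid.ofList ([] : List X)) = 1 := map_one σ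
      rw [this, mul_one]; exact LPath.nil c
  | cons x u ih =>
    have hw : negW (x :: u) = negW u ++ [Sum.inr x] := by
      simp [negW]
    rw [hw, LPath.append_iff_s12 σ]
    constructor
    · rintro ⟨b, hb, (_ | ⟨h₁, h₂⟩)⟩
      cases h₁ with
      | negW _ _ =>
        cases h₂
        rw [ih.mp hb]
        have : FreeMonoid.ofList (x :: u) = of x * FreeMonoid.ofList u := rfl
        rw [this, map_mul, mul_assoc]
    · rintro rfl
      refine ⟨c * σ (of x), ih.mpr ?_, LPath.cons (LStep.negW c x) (LPath.nil c)⟩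
      have : FreeMonoid.ofList (x :: u) = of x * FreeMonoid.ofList u := rfl
      rw [this, map_mul, mul_assoc]

theorem mem_loopProblem_pos_neg_iff {u v : List X} :
    posW u ++ negW v ∈ LoopProblem σ ↔ σ (FreeMonoid.ofList u) = σ (FreeMonoid.ofList v) := by
  show LPath σ 1 _ 1 ↔ _
  rw [LPath.append_iff_s12 σ]
  constructor
  · rintro ⟨b, hb, hb'⟩
    have h1 := (LPath.posW_iff σ).mp hb
    have h2 := (LPath.negW_iff σ).mp hb'
    rw [h1] at h2
    simpa using h2
  · intro h
    exact ⟨σ (FreeMonoid.ofList u), (LPath.posW_iff σ).mpr (by rw [one_mul]),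
      (LPath.negW_iff σ).mpr (by rw [h, one_mul])⟩

end Aux

theorem infinite_monoid_loop_problem_not_regular {X M : Type*} [Finite X] [Monoid M]
    [Infinite M] (σ : FreeMonoid X →* M) (hσ : Function.Surjective σ) :
    {K : Set (List (X ⊕ X)) | ∃ u : List (X ⊕ X),
        K = {x | u ++ x ∈ LoopProblem σ}}.Infinite ∧
      ¬ Language.IsRegular (LoopProblem σ : Language (X ⊕ X)) ∧
      ∀ u v : List X,
        {x | posW u ++ x ∈ LoopProblem σ} = {x | posW v ++ x ∈ LoopProblem σ} →
          σ (FreeMonoid.ofList u) = σ (FreeMonoid.ofList v) := by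
  have key : ∀ u v : List X,
      {x | posW u ++ x ∈ LoopProblem σ} = {x | posW v ++ x ∈ LoopProblem σ} →
        σ (FreeMonoid.ofList u) = σ (FreeMonoid.ofList v) := by
    intro u v h
    have hu : negW u ∈ {x | posW u ++ x ∈ LoopProblem σ} :=
      (mem_loopProblem_pos_neg_iff σ).mpr rfl
    rw [h] at hu
    exact ((mem_loopProblem_pos_neg_iff σ).mp hu).symm
  -- choose preimages
  choose g hg using hσ
  have hinj : Function.Injective
      (fun m : M => {x | posW (FreeMonoid.toList (g m)) ++ x ∈ LoopProblem σ}) := by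
    intro m m' h
    have := key _ _ h
    rwa [FreeMonoid.ofList_toList, FreeMonoid.ofList_toList, hg, hg] at this
  refine ⟨?_, ?_, key⟩
  · exact Set.infinite_of_injective_forall_mem hinj
      (fun m => ⟨posW (FreeMonoid.toList (g m)), rfl⟩)
  · rintro ⟨Q, hQ, A, hA⟩
    have : Function.Injective
        (fun m : M => A.eval (posW (FreeMonoid.toList (g m)))) := by
      intro m m' h
      have h' : A.eval (posW (FreeMonoid.toList (g m)))
          = A.eval (posW (FreeMonoid.toList (g m'))) := h
      apply hinj
      ext x
      simp only [Set.mem_setOf_eq]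
      have hmem : ∀ u : List (X ⊕ X), (u ∈ LoopProblem σ) ↔ A.eval u ∈ A.accept := by
        intro u
        rw [← hA]; rfl
      rw [hmem, hmem, DFA.eval, DFA.evalFrom_of_append, DFA.evalFrom_of_append]
      rw [show A.evalFrom A.start (posW (FreeMonoid.toList (g m))) = _ from h']
      rfl
    exact (Finite.of_injective _ this).not_infinite ‹Infinite M›
end
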